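/- arXiv:2402.00962 — 3 statements merged into one kernel-verified Lean document; each statement's English description precedes it below -/
import Mathlib

section
/- Let F, G : Type u ⥤ Type u be endofunctors and α : F ⟶ G an epi natural transformation. Then for every relation R : X₁ → X₂ → Prop and all u : F.obj X₁, v : F.obj X₂: Rel(F)_{≡^α}(R) (u, v) holds iff Rel(G)(R) (α.app X₁ u, α.app X₂ v) holds, where ≡^α is regarded as an order on F. -/
/-! By naturality, `α` sends the two projections of a witness `w : F ⟨R⟩` to the projections of
`α w`. So the `≡^α`-enriched lifting of `R` at `(u, v)` says exactly that some witness of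
`Rel(G)(R)` at `(α u, α v)` lies in the image of `α`, and surjectivity of `α` removes that
restriction. -/

open CategoryTheory

universe u

/-- Relation lifting `Rel(F)(R)`. -/
def RelLift (F : Type u ⥤ Type u) {X Y : Type u} (R : X → Y → Prop)
    (u : F.obj X) (v : F.obj Y) : Prop :=
  ∃ w : F.obj {p : X × Y // R p.1 p.2},
    F.map (TypeCat.ofHom (fun p => p.1.1)) w = u ∧ F.map (TypeCat.ofHom (fun p => p.1.2)) w = v

/-- `R` is an `F`-bisimulation between coalgebras `c` and `d`. -/
def IsBisimulation (F : Type u ⥤ Type u) {X Y : Type u}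
    (c : X → F.obj X) (d : Y → F.obj Y) (R : X → Y → Prop) : Prop :=
  ∀ x y, R x y → RelLift F R (c x) (d y)

/-- Order-enriched relation lifting `Rel(F)_⊑(R)`. -/
def RelLiftOrd (F : Type u ⥤ Type u) (r : ∀ X : Type u, F.obj X → F.obj X → Prop)
    {X Y : Type u} (R : X → Y → Prop) (u : F.obj X) (v : F.obj Y) : Prop :=
  ∃ w : F.obj {p : X × Y // R p.1 p.2},
    r X u (F.map (TypeCat.ofHom (fun p => p.1.1)) w) ∧ r Y (F.map (TypeCat.ofHom (fun p => p.1.2)) w) v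

/-- `R` is a `⊑`-simulation between coalgebras `c` and `d`. -/
def IsSimulation (F : Type u ⥤ Type u) (r : ∀ X : Type u, F.obj X → F.obj X → Prop)
    {X Y : Type u} (c : X → F.obj X) (d : Y → F.obj Y) (R : X → Y → Prop) : Prop :=
  ∀ x y, R x y → RelLiftOrd F r R (c x) (d y)

/-- The kernel equivalence `≡^α` of a natural transformation `α : F ⟶ G`. -/
def kernelRel {F G : Type u ⥤ Type u} (α : F ⟶ G) (X : Type u) :
    F.obj X → F.obj X → Prop :=
  fun u u' => α.app X u = α.app X u'

/-- `r` is an order on the functor `F`: a functorial family of preorders. -/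
def IsFunctorOrder (F : Type u ⥤ Type u)
    (r : ∀ X : Type u, F.obj X → F.obj X → Prop) : Prop :=
  (∀ (X : Type u) (u : F.obj X), r X u u) ∧
  (∀ (X : Type u) (u v w : F.obj X), r X u v → r X v w → r X u w) ∧
  (∀ (X Y : Type u) (f : X → Y) (u u' : F.obj X), r X u u' → r Y (F.map (TypeCat.ofHom f) u) (F.map (TypeCat.ofHom f) u'))

theorem relLiftOrd_kernelRel_iff_exists_app {F G : Type u ⥤ Type u} (α : F ⟶ G) {X Y : Type u}
    (R : X → Y → Prop) (u : F.obj X) (v : F.obj Y) :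
    RelLiftOrd F (kernelRel α) R u v ↔ ∃ w : F.obj {p : X × Y // R p.1 p.2},
      G.map (TypeCat.ofHom (fun p => p.1.1)) (α.app _ w) = α.app X u ∧
        G.map (TypeCat.ofHom (fun p => p.1.2)) (α.app _ w) = α.app Y v := by
  simp only [RelLiftOrd, kernelRel, NatTrans.naturality_apply, eq_comm (a := α.app X u)]

/-- for an epi natural transformation `α`, the `≡^α`-enriched lifting on `F`
corresponds exactly to the plain relation lifting on `G` through `α`. -/
theorem relLiftOrd_kernelRel_iff {F G : Type u ⥤ Type u} (α : F ⟶ G)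
    (hepi : ∀ X : Type u, Function.Surjective (α.app X))
    {X₁ X₂ : Type u} (R : X₁ → X₂ → Prop) (u : F.obj X₁) (v : F.obj X₂) :
    RelLiftOrd F (kernelRel α) R u v ↔ RelLift G R (α.app X₁ u) (α.app X₂ v) := by
  rw [relLiftOrd_kernelRel_iff_exists_app, RelLift, (hepi _).exists]
end

section
/- Let F, G : Type u ⥤ Type u be endofunctors, α : F ⟶ G an epi natural transformation, and R : X → Y → Prop a G-bisimulation between G-coalgebras b₁ : X → G.obj X and b₂ : Y → G.obj Y. Assume R is near injective: for every x : X the set {b₂ y | y such that R x y} has at most one element, and for every y : Y the set {b₁ x | x such that R x y} has at most one element. Then there exist F-representations a₁ : X → F.obj X of b₁ and a₂ : Y → F.obj Y of b₂ such that R is an F-bisimulation between a₁ and a₂. -/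
open CategoryTheory

universe u

/-! Lift, through the surjection `α.app ⟨R⟩`, a `G`-witness for each pair of `G`-values
`(b₁ x, b₂ y)` with `R x y`, and read `a₁ x`, `a₂ y` off the lifted witnesses. A priori `a₁ x`
depends on a chosen partner `y` of `x`; near injectivity says that all partners have the same
`b₂ y`, so the witness chosen for `(b₁ x, b₂ y)` serves every related pair at once. -/

open Function

section Lifting

variable {F G : Type u ⥤ Type u} (α : F ⟶ G) {X Y : Type u} {R : X → Y → Prop}

theorem RelLift.exists_relLift_of_surjective (hα : Surjective (α.app {p : X × Y // R p.1 p.2}))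
    {g₁ : G.obj X} {g₂ : G.obj Y} (h : RelLift G R g₁ g₂) :
    ∃ p : F.obj X × F.obj Y, RelLift F R p.1 p.2 ∧ α.app X p.1 = g₁ ∧ α.app Y p.2 = g₂ := by
  obtain ⟨w₀, rfl, rfl⟩ := h
  obtain ⟨w, rfl⟩ := hα w₀
  exact ⟨(_, _), ⟨w, rfl, rfl⟩, NatTrans.naturality_apply α _ w, NatTrans.naturality_apply α _ w⟩

variable (hα : ∀ X : Type u, Surjective (α.app X))

noncomputable def liftRelPair {g₁ : G.obj X} {g₂ : G.obj Y} (h : RelLift G R g₁ g₂) :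
    F.obj X × F.obj Y :=
  (h.exists_relLift_of_surjective α (hα _)).choose

theorem liftRelPair_spec {g₁ : G.obj X} {g₂ : G.obj Y} (h : RelLift G R g₁ g₂) :
    RelLift F R (liftRelPair α hα h).1 (liftRelPair α hα h).2 ∧
      α.app X (liftRelPair α hα h).1 = g₁ ∧ α.app Y (liftRelPair α hα h).2 = g₂ :=
  (h.exists_relLift_of_surjective α (hα _)).choose_spec

theorem liftRelPair_congr {g₁ g₁' : G.obj X} {g₂ g₂' : G.obj Y} (h : RelLift G R g₁ g₂)
    (h' : RelLift G R g₁' g₂') (e₁ : g₁ = g₁') (e₂ : g₂ = g₂') :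
    liftRelPair α hα h = liftRelPair α hα h' := by
  subst e₁ e₂
  rfl

end Lifting

section Representation

variable {F G : Type u ⥤ Type u} (α : F ⟶ G) (hα : ∀ X : Type u, Surjective (α.app X))
  {X Y : Type u} {R : X → Y → Prop} {b₁ : X → G.obj X} {b₂ : Y → G.obj Y}
  (hR : IsBisimulation G b₁ b₂ R)

open Classical in
noncomputable def leftRep (x : X) : F.obj X :=
  if h : ∃ y, R x y then (liftRelPair α hα (hR x _ h.choose_spec)).1 else surjInv (hα X) (b₁ x)

open Classical in
noncomputable def rightRep (y : Y) : F.obj Y :=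
  if h : ∃ x, R x y then (liftRelPair α hα (hR _ y h.choose_spec)).2 else surjInv (hα Y) (b₂ y)

theorem app_comp_leftRep : α.app X ∘ leftRep α hα hR = b₁ := by
  funext x
  rw [Function.comp_apply, leftRep]
  split_ifs with h
  · exact (liftRelPair_spec α hα _).2.1
  · exact surjInv_eq _ _

theorem app_comp_rightRep : α.app Y ∘ rightRep α hα hR = b₂ := by
  funext y
  rw [Function.comp_apply, rightRep]
  split_ifs with h
  · exact (liftRelPair_spec α hα _).2.2
  · exact surjInv_eq _ _

theorem leftRep_of_rel (hni : ∀ x : X, {g : G.obj Y | ∃ y, R x y ∧ g = b₂ y}.Subsingleton)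
    {x : X} {y : Y} (hxy : R x y) :
    leftRep α hα hR x = (liftRelPair α hα (hR x y hxy)).1 := by
  have h : ∃ y, R x y := ⟨y, hxy⟩
  rw [leftRep, dif_pos h]
  exact congrArg Prod.fst <| liftRelPair_congr α hα _ _ rfl <|
    hni x ⟨_, h.choose_spec, rfl⟩ ⟨y, hxy, rfl⟩

theorem rightRep_of_rel (hni : ∀ y : Y, {g : G.obj X | ∃ x, R x y ∧ g = b₁ x}.Subsingleton)
    {x : X} {y : Y} (hxy : R x y) :
    rightRep α hα hR y = (liftRelPair α hα (hR x y hxy)).2 := by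
  have h : ∃ x, R x y := ⟨x, hxy⟩
  rw [rightRep, dif_pos h]
  exact congrArg Prod.snd <| liftRelPair_congr α hα _ _
    (hni y ⟨_, h.choose_spec, rfl⟩ ⟨x, hxy, rfl⟩) rfl

theorem isBisimulation_leftRep_rightRep
    (hni₁ : ∀ x : X, {g : G.obj Y | ∃ y, R x y ∧ g = b₂ y}.Subsingleton)
    (hni₂ : ∀ y : Y, {g : G.obj X | ∃ x, R x y ∧ g = b₁ x}.Subsingleton) :
    IsBisimulation F (leftRep α hα hR) (rightRep α hα hR) R := fun x y hxy => by
  rw [leftRep_of_rel α hα hR hni₁ hxy, rightRep_of_rel α hα hR hni₂ hxy]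
  exact (liftRelPair_spec α hα _).1

end Representation

/-- a near injective `G`-bisimulation can be realized as an `F`-bisimulation
between suitable `F`-representations. -/
theorem near_injective_bisim_reflects {F G : Type u ⥤ Type u} (α : F ⟶ G)
    (hepi : ∀ X : Type u, Function.Surjective (α.app X))
    {X Y : Type u} (b₁ : X → G.obj X) (b₂ : Y → G.obj Y)
    (R : X → Y → Prop) (hR : IsBisimulation G b₁ b₂ R)
    (hni₁ : ∀ x : X, {g : G.obj Y | ∃ y, R x y ∧ g = b₂ y}.Subsingleton)
    (hni₂ : ∀ y : Y, {g : G.obj X | ∃ x, R x y ∧ g = b₁ x}.Subsingleton) :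
    ∃ (a₁ : X → F.obj X) (a₂ : Y → F.obj Y),
      α.app X ∘ a₁ = b₁ ∧ α.app Y ∘ a₂ = b₂ ∧ IsBisimulation F a₁ a₂ R :=
  ⟨leftRep α hepi hR, rightRep α hepi hR, app_comp_leftRep α hepi hR, app_comp_rightRep α hepi hR,
    isBisimulation_leftRep_rightRep α hepi hR hni₁ hni₂⟩
end

section
/- There exist set-coalgebras with a powerset bisimulation between them but no multiset bisimulation between any of their multiset representations: let Y := {β : List ℕ // ∀ i (h : i < β.length), β.get ⟨i, h⟩ ≤ i}, let t_Y : Y → Set Y send β to the set of its valid one-step extensions {β' : Y | ∃ j ≤ (β : List ℕ).length, (β' : List ℕ) = (β : List ℕ) ++ [j]}, and let t_X : Unit → Set Unit send u to {u}. Then for every pair of multiset coalgebras a₁ : Unit → Multiset Unit and a₂ : Y → Multiset Y whose supports realize t_X and t_Y (i.e., {x | x ∈ a₁ u} = t_X u for all u and {β' | β' ∈ a₂ β} = t_Y β for all β), there is no Mul-bisimulation R between a₁ and a₂ with R () ε, where ε : Y is the empty list and Mul is the multiset endofunctor (object map X ↦ Multiset X, action Multiset.map). -/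
open CategoryTheory

universe u

/-- The multiset endofunctor. -/
def MSetF : Type u ⥤ Type u where
  obj X := Multiset X
  map f := TypeCat.ofHom (Multiset.map f)
  map_id := by intro X; ext M; simp [types_id]
  map_comp := by intro X Y Z f g; ext M; simp [types_comp]

/-- The state space of the infinitely branching system: lists `β` of naturals
with `β i ≤ i` at every position. -/
def Yt : Type := {β : List ℕ // ∀ i (h : i < β.length), β.get ⟨i, h⟩ ≤ i}

/-- The transition function of the infinitely branching system: all one-step
valid extensions. -/
def tY : Yt → Set Yt := fun β =>
  {β' | ∃ j ≤ β.1.length, β'.1 = β.1 ++ [j]}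

/-- The one-state, one-loop system. -/
def tX : Unit → Set Unit := fun u => {u}

/-- The empty list as an element of `Yt`. -/
def epsY : Yt := ⟨[], fun i h => absurd h (Nat.not_lt_zero i)⟩

/-!
A multiset bisimulation preserves the number of successors counted with multiplicity, since
the witness multiset projects onto both successor multisets. Every successor of a related `y`
is related to some successor of `x`, so from `R () ε` we reach related states `β` of every
length. But `()` has a fixed number `N` of successors, while a state of length `N` has the
`N + 1` distinct successors `β ++ [j]`, `j ≤ N`.
-/

section MultisetBisimulation

variable {X Y : Type u} {R : X → Y → Prop} {s : Multiset X} {t : Multiset Y}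

theorem relLift_MSetF_iff :
    RelLift MSetF R s t ↔ ∃ w : Multiset {p : X × Y // R p.1 p.2},
      w.map (fun p => p.1.1) = s ∧ w.map (fun p => p.1.2) = t :=
  Iff.rfl

theorem RelLift.card_eq_of_MSetF (h : RelLift MSetF R s t) :
    Multiset.card s = Multiset.card t := by
  obtain ⟨w, rfl, rfl⟩ := relLift_MSetF_iff.mp h
  simp only [Multiset.card_map]

theorem RelLift.exists_mem_of_MSetF (h : RelLift MSetF R s t) {y : Y} (hy : y ∈ t) :
    ∃ x ∈ s, R x y := by
  obtain ⟨w, rfl, rfl⟩ := relLift_MSetF_iff.mp h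
  obtain ⟨p, hp, rfl⟩ := Multiset.mem_map.mp hy
  exact ⟨p.1.1, Multiset.mem_map_of_mem _ hp, p.2⟩

end MultisetBisimulation

theorem Multiset.card_le_card_of_injective_mem {ι α : Type*} [Fintype ι] {f : ι → α}
    (hf : Function.Injective f) {s : Multiset α} (hs : ∀ i, f i ∈ s) :
    Fintype.card ι ≤ Multiset.card s := by
  have hnodup : (Finset.univ.val.map f).Nodup := Finset.univ.nodup.map hf
  have hle : Finset.univ.val.map f ≤ s :=
    (Multiset.le_iff_subset hnodup).mpr fun a ha => by
      obtain ⟨i, -, rfl⟩ := Multiset.mem_map.mp ha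
      exact hs i
  simpa using Multiset.card_le_card hle

namespace Yt

def snoc (β : Yt) (j : ℕ) (hj : j ≤ β.1.length) : Yt :=
  ⟨β.1 ++ [j], fun i hi => by
    simp only [List.get_eq_getElem, List.getElem_append]
    split_ifs with hlt
    · simpa using β.2 i hlt
    · simp only [List.length_append, List.length_singleton] at hi
      simp only [List.getElem_singleton]
      omega⟩

theorem length_snoc (β : Yt) (j : ℕ) (hj : j ≤ β.1.length) :
    (β.snoc j hj).1.length = β.1.length + 1 := by
  simp [snoc]

theorem snoc_mem_tY (β : Yt) (j : ℕ) (hj : j ≤ β.1.length) : β.snoc j hj ∈ tY β :=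
  ⟨j, hj, rfl⟩

theorem length_lt_card_of_tY_subset {β : Yt} {s : Multiset Yt} (hs : tY β ⊆ {β' | β' ∈ s}) :
    β.1.length < Multiset.card s := by
  have hmem : ∀ j : Fin (β.1.length + 1), β.snoc j (Nat.lt_succ_iff.mp j.2) ∈ s := fun j =>
    hs (snoc_mem_tY β _ _)
  have hinj : Function.Injective fun j : Fin (β.1.length + 1) => β.snoc j (Nat.lt_succ_iff.mp j.2) :=
    fun j k hjk => Fin.ext (by simpa [snoc] using congrArg Subtype.val hjk)
  simpa using Multiset.card_le_card_of_injective_mem hinj hmem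

end Yt

theorem no_multiset_bisimulation_general
    (a₁ : Unit → Multiset Unit) (a₂ : Yt → Multiset Yt)
    (h₂ : ∀ β, {β' | β' ∈ a₂ β} = tY β)
    (R : Unit → Yt → Prop) (hR : IsBisimulation MSetF a₁ a₂ R) :
    ¬ R () epsY := by
  intro hε
  have hsub : ∀ β, tY β ⊆ {β' | β' ∈ a₂ β} := fun β => (h₂ β).symm.subset
  have step : ∀ β, R () β → ∃ β', R () β' ∧ β'.1.length = β.1.length + 1 := fun β hβ => by
    obtain ⟨⟨⟩, -, hβ'⟩ :=
      (hR _ _ hβ).exists_mem_of_MSetF (hsub β (Yt.snoc_mem_tY β 0 (Nat.zero_le _)))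
    exact ⟨_, hβ', Yt.length_snoc β 0 _⟩
  have reach : ∀ n, ∃ β, R () β ∧ β.1.length = n := fun n => by
    induction n with
    | zero => exact ⟨epsY, hε, rfl⟩
    | succ n ih =>
      obtain ⟨β, hβ, rfl⟩ := ih
      exact step β hβ
  obtain ⟨β, hβ, hlen⟩ := reach (Multiset.card (a₁ ()))
  have hcard := (hR _ _ hβ).card_eq_of_MSetF
  have hlt := Yt.length_lt_card_of_tY_subset (hsub β)
  omega

/-- although `tX` and `tY` are related by a powerset bisimulation
(relating `()` and `ε`), there is no multiset bisimulation relating `()` and `ε`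
between any multiset representations of `tX` and `tY`. -/
theorem no_multiset_bisimulation
    (a₁ : Unit → Multiset Unit) (a₂ : Yt → Multiset Yt)
    (h₁ : ∀ u, {x | x ∈ a₁ u} = tX u)
    (h₂ : ∀ β, {β' | β' ∈ a₂ β} = tY β)
    (R : Unit → Yt → Prop) (hR : IsBisimulation MSetF a₁ a₂ R) :
    ¬ R () epsY :=
  no_multiset_bisimulation_general a₁ a₂ h₂ R hR
end
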